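/- For a twice continuously differentiable function f : ℝ³ → ℝ of variables (φ, θ, z), define the first-order operators X̄f = cos(θ+z)·∂_φ f − (1/2)·sin(θ+z)·(coth(φ/2) − tanh(φ/2))·∂_θ f − tanh(φ/2)·sin(θ+z)·∂_z f and Ȳf = sin(θ+z)·∂_φ f + (1/2)·cos(θ+z)·(coth(φ/2) − tanh(φ/2))·∂_θ f + tanh(φ/2)·cos(θ+z)·∂_z f. Then at every point p = (φ, θ, z) with φ ≠ 0, and for every f that is C² on a neighbourhood of p: X̄(X̄f)(p) + Ȳ(Ȳf)(p) = ∂²_{φφ}f(p) + (1/sinh²φ)·∂²_{θθ}f(p) + tanh²(φ/2)·∂²_{zz}f(p) + (1/cosh²(φ/2))·∂²_{θz}f(p) + coth(φ)·∂_φ f(p). (X̄ and Ȳ are the left-invariant vector fields of SL(2,ℝ) in cylindrical coordinates, and the right-hand side is twice the subLaplacian of SL(2,ℝ).) -/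

import Mathlib

/-- Partial derivative of `f : ℝ³ → ℝ` in the `i`-th coordinate direction. -/
noncomputable def pd (i : Fin 3) (f : (Fin 3 → ℝ) → ℝ) : (Fin 3 → ℝ) → ℝ :=
  fun p => fderiv ℝ f p (Pi.single i 1)

/-- The left-invariant vector field `X̄` of `SL(2,ℝ)` in cylindrical coordinates
`p = (φ, θ, z)`, acting on functions.  Here `coth x = cosh x / sinh x`. -/
noncomputable def Xbar (f : (Fin 3 → ℝ) → ℝ) : (Fin 3 → ℝ) → ℝ := fun p =>
  Real.cos (p 1 + p 2) * pd 0 f p -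
    1 / 2 * Real.sin (p 1 + p 2) *
      (Real.cosh (p 0 / 2) / Real.sinh (p 0 / 2) - Real.tanh (p 0 / 2)) * pd 1 f p -
    Real.tanh (p 0 / 2) * Real.sin (p 1 + p 2) * pd 2 f p

/-- The left-invariant vector field `Ȳ` of `SL(2,ℝ)` in cylindrical coordinates
`p = (φ, θ, z)`, acting on functions. -/
noncomputable def Ybar (f : (Fin 3 → ℝ) → ℝ) : (Fin 3 → ℝ) → ℝ := fun p =>
  Real.sin (p 1 + p 2) * pd 0 f p +
    1 / 2 * Real.cos (p 1 + p 2) *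
      (Real.cosh (p 0 / 2) / Real.sinh (p 0 / 2) - Real.tanh (p 0 / 2)) * pd 1 f p +
    Real.tanh (p 0 / 2) * Real.cos (p 1 + p 2) * pd 2 f p

/-!
`X̄` and `Ȳ` are the frame `(∂_φ, B)`, `B = (1/sinh φ) ∂_θ + tanh(φ/2) ∂_z`, rotated by the angle
`α = θ + z`. For any frame `(a, b)` and angle `α`, the sum of squares of the rotated frame equals
`a² + b²` plus the first-order term `(bα) a - (aα) b`: the cross terms cancel because the rotation
is orthogonal. Here `aα = 0` and `bα = 1/sinh φ + tanh(φ/2) = coth φ`, while `B² f` is the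
quadratic form of the coefficients of `B` in the Hessian, since these depend on `φ` only and `B`
has no `∂_φ` component; the mixed partials commute as `f` is `C²`.
-/

section DerivAlong

variable {𝕜 : Type*} [NontriviallyNormedField 𝕜]
  {E : Type*} [NormedAddCommGroup E] [NormedSpace 𝕜 E]
  {F : Type*} [NormedAddCommGroup F] [NormedSpace 𝕜 F]

variable (𝕜) in
noncomputable def derivAlong (V : E → E) (f : E → F) : E → F :=
  fun x => fderiv 𝕜 f x (V x)

theorem derivAlong_derivAlong {f : E → F} {V : E → E} {x : E}
    (hf : DifferentiableAt 𝕜 (fderiv 𝕜 f) x) (hV : DifferentiableAt 𝕜 V x) (W : E → E) :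
    derivAlong 𝕜 W (derivAlong 𝕜 V f) x =
      fderiv 𝕜 (fderiv 𝕜 f) x (W x) (V x) + fderiv 𝕜 f x (fderiv 𝕜 V x (W x)) := by
  change fderiv 𝕜 (fun y => fderiv 𝕜 f y (V y)) x (W x) = _
  rw [fderiv_clm_apply hf hV]
  exact add_comm _ _

theorem fderiv_comp_eval_apply {ι : Type*} [Fintype ι] {g : 𝕜 → E} {x : ι → 𝕜} {i : ι}
    (hg : DifferentiableAt 𝕜 g (x i)) (v : ι → 𝕜) :
    fderiv 𝕜 (fun q => g (q i)) x v = fderiv 𝕜 g (x i) (v i) := by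
  have h : HasFDerivAt (fun q => g (q i)) _ x := hg.hasFDerivAt.comp x (hasFDerivAt_apply i x)
  rw [h.fderiv]
  rfl

end DerivAlong

section Rotation

variable {E : Type*} [NormedAddCommGroup E] [NormedSpace ℝ E]
  {F : Type*} [NormedAddCommGroup F] [NormedSpace ℝ F]

theorem derivAlong_rotate_sq_add_sq {f : E → F} {α : E → ℝ} {a b : E → E} {x : E}
    (hf : DifferentiableAt ℝ (fderiv ℝ f) x) (hα : DifferentiableAt ℝ α x)
    (ha : DifferentiableAt ℝ a x) (hb : DifferentiableAt ℝ b x) :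
    derivAlong ℝ (fun y => Real.cos (α y) • a y - Real.sin (α y) • b y)
        (derivAlong ℝ (fun y => Real.cos (α y) • a y - Real.sin (α y) • b y) f) x +
      derivAlong ℝ (fun y => Real.sin (α y) • a y + Real.cos (α y) • b y)
        (derivAlong ℝ (fun y => Real.sin (α y) • a y + Real.cos (α y) • b y) f) x =
      derivAlong ℝ a (derivAlong ℝ a f) x + derivAlong ℝ b (derivAlong ℝ b f) x +
        fderiv ℝ f x (fderiv ℝ α x (b x) • a x - fderiv ℝ α x (a x) • b x) := by
  have hc := (Real.hasDerivAt_cos (α x)).comp_hasFDerivAt x hα.hasFDerivAt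
  have hs := (Real.hasDerivAt_sin (α x)).comp_hasFDerivAt x hα.hasFDerivAt
  have hX : HasFDerivAt (fun y => Real.cos (α y) • a y - Real.sin (α y) • b y) _ x :=
    (hc.smul ha.hasFDerivAt).sub (hs.smul hb.hasFDerivAt)
  have hY : HasFDerivAt (fun y => Real.sin (α y) • a y + Real.cos (α y) • b y) _ x :=
    (hs.smul ha.hasFDerivAt).add (hc.smul hb.hasFDerivAt)
  rw [derivAlong_derivAlong hf hX.differentiableAt, derivAlong_derivAlong hf hY.differentiableAt,
    derivAlong_derivAlong hf ha, derivAlong_derivAlong hf hb, hX.fderiv, hY.fderiv]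
  simp only [map_sub, map_smul, sub_apply, smul_apply, Function.comp_apply, neg_smul, add_apply,
    ContinuousLinearMap.smulRight_apply, neg_apply, map_add, map_neg]
  have hcs := Real.cos_sq_add_sin_sq (α x)
  set D := fderiv ℝ (fderiv ℝ f) x
  set Df := fderiv ℝ f x
  linear_combination (norm := module) hcs • (D (a x) (a x) + D (b x) (b x) +
    Df (fderiv ℝ a x (a x)) + Df (fderiv ℝ b x (b x)) +
    fderiv ℝ α x (b x) • Df (a x) - fderiv ℝ α x (a x) • Df (b x))

end Rotation

namespace Real

/- This identity and the next one also hold at `x = 0`, where both sides are `0` because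
division by `sinh 0 = 0` returns `0`. -/
theorem one_div_two_mul_coth_half_sub_tanh_half (x : ℝ) :
    1 / 2 * (cosh (x / 2) / sinh (x / 2) - tanh (x / 2)) = (sinh x)⁻¹ := by
  rcases eq_or_ne x 0 with rfl | hx
  · simp
  have hs : sinh (x / 2) ≠ 0 := by simpa using hx
  have hc := (cosh_pos (x / 2)).ne'
  rw [show x = 2 * (x / 2) by ring, sinh_two_mul, tanh_eq_sinh_div_cosh]
  field_simp
  linear_combination cosh_sq_sub_sinh_sq (x / 2)

theorem inv_sinh_add_tanh_half (x : ℝ) : (sinh x)⁻¹ + tanh (x / 2) = cosh x / sinh x := by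
  rcases eq_or_ne x 0 with rfl | hx
  · simp
  have hs : sinh (x / 2) ≠ 0 := by simpa using hx
  have hc := (cosh_pos (x / 2)).ne'
  rw [show x = 2 * (x / 2) by ring, sinh_two_mul, cosh_two_mul, tanh_eq_sinh_div_cosh]
  field_simp
  linear_combination -cosh_sq_sub_sinh_sq (x / 2)

theorem two_mul_inv_sinh_mul_tanh_half {x : ℝ} (hx : x ≠ 0) :
    2 * ((sinh x)⁻¹ * tanh (x / 2)) = 1 / cosh (x / 2) ^ 2 := by
  have hs : sinh (x / 2) ≠ 0 := by simpa using hx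
  have hc := (cosh_pos (x / 2)).ne'
  rw [show x = 2 * (x / 2) by ring, sinh_two_mul, tanh_eq_sinh_div_cosh]
  field_simp

end Real

theorem pd_eq_derivAlong (i : Fin 3) (f : (Fin 3 → ℝ) → ℝ) :
    pd i f = derivAlong ℝ (fun _ => Pi.single i 1) f :=
  rfl

theorem pd_pd_apply {f : (Fin 3 → ℝ) → ℝ} {p : Fin 3 → ℝ}
    (hf : DifferentiableAt ℝ (fderiv ℝ f) p) (i j : Fin 3) :
    pd i (pd j f) p = fderiv ℝ (fderiv ℝ f) p (Pi.single i 1) (Pi.single j 1) := by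
  simp [pd_eq_derivAlong, derivAlong_derivAlong hf (differentiableAt_const _)]

noncomputable def cylFrameB (φ : ℝ) : Fin 3 → ℝ :=
  (Real.sinh φ)⁻¹ • Pi.single 1 1 + Real.tanh (φ / 2) • Pi.single 2 1

theorem differentiableAt_cylFrameB {φ : ℝ} (hφ : φ ≠ 0) : DifferentiableAt ℝ cylFrameB φ := by
  have hs : Real.sinh φ ≠ 0 := by simpa using hφ
  have hc := (Real.cosh_pos (φ / 2)).ne'
  unfold cylFrameB
  simp only [Real.tanh_eq_sinh_div_cosh]
  fun_prop (disch := assumption)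

theorem Xbar_eq_derivAlong (f : (Fin 3 → ℝ) → ℝ) :
    Xbar f = derivAlong ℝ
        (fun q => Real.cos (q 1 + q 2) • Pi.single 0 1 - Real.sin (q 1 + q 2) • cylFrameB (q 0))
      f := by
  ext q
  simp only [Xbar, derivAlong, pd, cylFrameB, ← Real.one_div_two_mul_coth_half_sub_tanh_half,
    map_add, map_sub, map_smul, smul_eq_mul]
  ring

theorem Ybar_eq_derivAlong (f : (Fin 3 → ℝ) → ℝ) :
    Ybar f = derivAlong ℝ
        (fun q => Real.sin (q 1 + q 2) • Pi.single 0 1 + Real.cos (q 1 + q 2) • cylFrameB (q 0))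
      f := by
  ext q
  simp only [Ybar, derivAlong, pd, cylFrameB, ← Real.one_div_two_mul_coth_half_sub_tanh_half,
    map_add, map_smul, smul_eq_mul]
  ring

theorem derivAlong_cylFrameB_derivAlong_cylFrameB {f : (Fin 3 → ℝ) → ℝ} {p : Fin 3 → ℝ}
    (hp : p 0 ≠ 0) (hf : ContDiffAt ℝ 2 f p) :
    derivAlong ℝ (fun q => cylFrameB (q 0)) (derivAlong ℝ (fun q => cylFrameB (q 0)) f) p =
      (Real.sinh (p 0))⁻¹ ^ 2 * pd 1 (pd 1 f) p +
        2 * ((Real.sinh (p 0))⁻¹ * Real.tanh (p 0 / 2)) * pd 1 (pd 2 f) p +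
        Real.tanh (p 0 / 2) ^ 2 * pd 2 (pd 2 f) p := by
  have hf' : DifferentiableAt ℝ (fderiv ℝ f) p :=
    (hf.fderiv_right le_rfl).differentiableAt one_ne_zero
  have hB := differentiableAt_cylFrameB hp
  have hB' : DifferentiableAt ℝ (fun q : Fin 3 → ℝ => cylFrameB (q 0)) p :=
    .fun_comp' p hB (hasFDerivAt_apply 0 p).differentiableAt
  have hsymm := hf.isSymmSndFDerivAt (by simp [minSmoothness_of_isRCLikeNormedField])
  rw [derivAlong_derivAlong hf' hB', fderiv_comp_eval_apply hB,
    pd_pd_apply hf', pd_pd_apply hf', pd_pd_apply hf']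
  simp [cylFrameB, hsymm (Pi.single 2 1) (Pi.single 1 1)]
  ring

/-- Twice the subLaplacian of `SL(2,ℝ)` in cylindrical coordinates: at
every point `p = (φ, θ, z)` with `φ ≠ 0` and for every `f` that is `C²` near `p`,
`X̄²f + Ȳ²f = ∂²_{φφ}f + (1/sinh²φ)∂²_{θθ}f + tanh²(φ/2)∂²_{zz}f + (1/cosh²(φ/2))∂²_{θz}f
+ coth(φ)∂_φ f`. -/
theorem sl2_subLaplacian_cylindrical (p : Fin 3 → ℝ) (hp : p 0 ≠ 0)
    (f : (Fin 3 → ℝ) → ℝ) (hf : ContDiffAt ℝ 2 f p) :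
    Xbar (Xbar f) p + Ybar (Ybar f) p =
      pd 0 (pd 0 f) p + 1 / Real.sinh (p 0) ^ 2 * pd 1 (pd 1 f) p +
        Real.tanh (p 0 / 2) ^ 2 * pd 2 (pd 2 f) p +
        1 / Real.cosh (p 0 / 2) ^ 2 * pd 1 (pd 2 f) p +
        Real.cosh (p 0) / Real.sinh (p 0) * pd 0 f p := by
  have hf' : DifferentiableAt ℝ (fderiv ℝ f) p :=
    (hf.fderiv_right le_rfl).differentiableAt one_ne_zero
  have hB : DifferentiableAt ℝ (fun q : Fin 3 → ℝ => cylFrameB (q 0)) p :=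
    .fun_comp' p (differentiableAt_cylFrameB hp) (hasFDerivAt_apply 0 p).differentiableAt
  rw [Xbar_eq_derivAlong, Ybar_eq_derivAlong, Xbar_eq_derivAlong, Ybar_eq_derivAlong,
    derivAlong_rotate_sq_add_sq hf' (by fun_prop) (differentiableAt_const _) hB,
    derivAlong_cylFrameB_derivAlong_cylFrameB hp hf]
  have hangle (v : Fin 3 → ℝ) : fderiv ℝ (fun q : Fin 3 → ℝ => q 1 + q 2) p v = v 1 + v 2 := by
    rw [((hasFDerivAt_apply 1 p).fun_add (hasFDerivAt_apply 2 p)).fderiv]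
    rfl
  rw [hangle, hangle, ← pd_eq_derivAlong, ← pd_eq_derivAlong,
    Real.two_mul_inv_sinh_mul_tanh_half hp, ← Real.inv_sinh_add_tanh_half]
  simp [cylFrameB, pd]
  ring
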